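/- arXiv:2604.19724 — 3 statements merged into one kernel-verified Lean document; each statement's English description precedes it below -/
import Mathlib

section
/- Let ι be a nonempty finite index set with cardinality M, let δ ≥ 0, and let a : ι → ℝ satisfy |a i| ≤ δ for every i ∈ ι. Then for every i ∈ ι, exp(−δ)/(exp(−δ) + (M − 1)·exp(δ)) ≤ exp(a i) / Σ_{j ∈ ι} exp(a j) ≤ exp(δ)/(exp(δ) + (M − 1)·exp(−δ)). -/
/-!
Write `∑ j, exp (a j) = exp (a i) + ∑ j ≠ i, exp (a j)`. The weight `x / (x + r)` increases in
`x` and decreases in `r`, and each of the `M - 1` terms of `r` lies in `[exp (-δ), exp δ]`, so the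
weight is extremal when `exp (a i)` sits at one end of this interval and all other terms at the
other end.
-/

open Real Finset

section Softmax

variable {α : Type*} [Field α] [LinearOrder α] [IsStrictOrderedRing α]

theorem div_add_le_div_add {x y r s : α} (hx : 0 < x) (hxy : x ≤ y) (hs : 0 ≤ s)
    (hsr : s ≤ r) : x / (x + r) ≤ y / (y + s) := by
  have hy : 0 < y := hx.trans_le hxy
  rw [div_le_div_iff₀ (by linarith) (by linarith)]
  nlinarith [mul_le_mul hxy hsr hs hy.le]

variable {ι : Type*} [Fintype ι]

theorem card_sub_one_mul_le_sum_erase [DecidableEq ι] {f : ι → α} {c : α}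
    (hf : ∀ j, c ≤ f j) (i : ι) :
    ((Fintype.card ι : α) - 1) * c ≤ ∑ j ∈ univ.erase i, f j := by
  rw [← card_univ, ← cast_card_erase_of_mem (mem_univ i), ← nsmul_eq_mul]
  exact card_nsmul_le_sum _ _ _ fun j _ => hf j

theorem sum_erase_le_card_sub_one_mul [DecidableEq ι] {f : ι → α} {c : α}
    (hf : ∀ j, f j ≤ c) (i : ι) :
    ∑ j ∈ univ.erase i, f j ≤ ((Fintype.card ι : α) - 1) * c := by
  rw [← card_univ, ← cast_card_erase_of_mem (mem_univ i), ← nsmul_eq_mul]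
  exact sum_le_card_nsmul _ _ _ fun j _ => hf j

theorem div_sum_bounds_of_forall_mem_Icc {f : ι → α} {lo hi : α} (hlo : 0 < lo)
    (hf : ∀ j, f j ∈ Set.Icc lo hi) (i : ι) :
    lo / (lo + ((Fintype.card ι : α) - 1) * hi) ≤ f i / ∑ j, f j ∧
      f i / ∑ j, f j ≤ hi / (hi + ((Fintype.card ι : α) - 1) * lo) := by
  classical
  have hcard : (0 : α) ≤ (Fintype.card ι : α) - 1 :=
    sub_nonneg.2 (Nat.one_le_cast.2 (Fintype.card_pos_iff.2 ⟨i⟩))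
  rw [← add_sum_erase _ _ (mem_univ i)]
  exact ⟨div_add_le_div_add hlo (hf i).1
      (sum_nonneg fun j _ => hlo.le.trans (hf j).1)
      (sum_erase_le_card_sub_one_mul (fun j => (hf j).2) i),
    div_add_le_div_add (hlo.trans_le (hf i).1) (hf i).2 (mul_nonneg hcard hlo.le)
      (card_sub_one_mul_le_sum_erase (fun j => (hf j).1) i)⟩

end Softmax

theorem softmax_weight_bounds_general {ι : Type*} [Fintype ι]
    (δ : ℝ) (a : ι → ℝ) (ha : ∀ i, |a i| ≤ δ) (i : ι) :
    Real.exp (-δ) / (Real.exp (-δ) + ((Fintype.card ι : ℝ) - 1) * Real.exp δ)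
        ≤ Real.exp (a i) / ∑ j, Real.exp (a j) ∧
    Real.exp (a i) / ∑ j, Real.exp (a j)
        ≤ Real.exp δ / (Real.exp δ + ((Fintype.card ι : ℝ) - 1) * Real.exp (-δ)) := by
  exact div_sum_bounds_of_forall_mem_Icc (exp_pos (-δ))
    (fun j => ⟨exp_le_exp.2 (neg_le_of_abs_le (ha j)), exp_le_exp.2 (le_of_abs_le (ha j))⟩) i

/-- Softmax bound: if all logits satisfy `|a i| ≤ δ`, then every softmax weight
lies between `exp(-δ)/(exp(-δ) + (M-1)·exp δ)` and `exp δ/(exp δ + (M-1)·exp(-δ))`,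
where `M` is the number of indices. -/
theorem softmax_weight_bounds {ι : Type*} [Fintype ι] [Nonempty ι]
    (δ : ℝ) (hδ : 0 ≤ δ) (a : ι → ℝ) (ha : ∀ i, |a i| ≤ δ) (i : ι) :
    Real.exp (-δ) / (Real.exp (-δ) + ((Fintype.card ι : ℝ) - 1) * Real.exp δ)
        ≤ Real.exp (a i) / ∑ j, Real.exp (a j) ∧
    Real.exp (a i) / ∑ j, Real.exp (a j)
        ≤ Real.exp δ / (Real.exp δ + ((Fintype.card ι : ℝ) - 1) * Real.exp (-δ)) :=
  softmax_weight_bounds_general δ a ha i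
end

section
/- Let ι be a nonempty finite index set, let ε ≥ 0, and let a, b : ι → ℝ satisfy |a i − b i| ≤ ε for every i ∈ ι. Then for every i ∈ ι, exp(a i) / Σ_{j ∈ ι} exp(a j) ≤ exp(2ε) · exp(b i) / Σ_{j ∈ ι} exp(b j). -/
/-! Each `exp (a j)` lies within a factor `exp ε` of `exp (b j)`, so passing from `b` to `a`
raises the numerator of a softmax weight by at most `exp ε` and lowers the normaliser by at most
`exp ε`. -/

open Real Finset

noncomputable def softmax {ι : Type*} [Fintype ι] (a : ι → ℝ) (i : ι) : ℝ :=
  exp (a i) / ∑ j, exp (a j)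

theorem exp_le_exp_mul_exp_of_sub_le {x y ε : ℝ} (h : x - y ≤ ε) : exp x ≤ exp ε * exp y := by
  rw [← exp_add]
  exact exp_le_exp.mpr (by linarith)

section

variable {ι : Type*}

theorem sum_exp_le_exp_mul_sum_exp (s : Finset ι) {a b : ι → ℝ} {ε : ℝ}
    (h : ∀ j ∈ s, a j - b j ≤ ε) : ∑ j ∈ s, exp (a j) ≤ exp ε * ∑ j ∈ s, exp (b j) := by
  rw [mul_sum]
  exact sum_le_sum fun j hj => exp_le_exp_mul_exp_of_sub_le (h j hj)

variable [Fintype ι]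

theorem sum_exp_pos (a : ι → ℝ) (i : ι) : 0 < ∑ j, exp (a j) :=
  sum_pos (fun j _ => exp_pos (a j)) ⟨i, mem_univ i⟩

theorem softmax_le_exp_two_mul_mul_softmax {a b : ι → ℝ} {ε : ℝ}
    (hab : ∀ j, |a j - b j| ≤ ε) (i : ι) : softmax a i ≤ exp (2 * ε) * softmax b i := by
  have numerator : exp (a i) ≤ exp ε * exp (b i) :=
    exp_le_exp_mul_exp_of_sub_le (abs_le.mp (hab i)).2
  have normaliser : ∑ j, exp (b j) ≤ exp ε * ∑ j, exp (a j) :=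
    sum_exp_le_exp_mul_sum_exp univ fun j _ => by linarith [(abs_le.mp (hab j)).1]
  rw [softmax, softmax, ← mul_div_assoc, div_le_div_iff₀ (sum_exp_pos a i) (sum_exp_pos b i),
    two_mul, exp_add]
  calc exp (a i) * ∑ j, exp (b j)
      ≤ (exp ε * exp (b i)) * (exp ε * ∑ j, exp (a j)) :=
        mul_le_mul numerator normaliser (sum_exp_pos b i).le (by positivity)
    _ = exp ε * exp ε * exp (b i) * ∑ j, exp (a j) := by ring

end

theorem softmax_perturbation_ratio_general {ι : Type*} [Fintype ι]
    (ε : ℝ) (a b : ι → ℝ) (hab : ∀ i, |a i - b i| ≤ ε) (i : ι) :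
    Real.exp (a i) / ∑ j, Real.exp (a j)
        ≤ Real.exp (2 * ε) * (Real.exp (b i) / ∑ j, Real.exp (b j)) :=
  softmax_le_exp_two_mul_mul_softmax hab i

/-- Softmax robustness: if each logit changes by at most `ε`, then each softmax
weight changes by a multiplicative factor of at most `exp (2ε)`. -/
theorem softmax_perturbation_ratio {ι : Type*} [Fintype ι] [Nonempty ι]
    (ε : ℝ) (hε : 0 ≤ ε) (a b : ι → ℝ) (hab : ∀ i, |a i - b i| ≤ ε) (i : ι) :
    Real.exp (a i) / ∑ j, Real.exp (a j)
        ≤ Real.exp (2 * ε) * (Real.exp (b i) / ∑ j, Real.exp (b j)) :=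
  softmax_perturbation_ratio_general ε a b hab i
end

section
/- Let M ≥ 1, τ ≥ 0, and μ₊, μ₋ ∈ ℝ^d with ‖μ₊‖ ≤ τ and ‖μ₋‖ ≤ τ. Let ν be a probability measure on the space of token families (Fin M → ℝ^d), and let f : (Fin M → ℝ^d) → ℝ. For a token family ξ, let X₊(ξ) be ξ with its token at index 0 replaced by μ₊, and X₋(ξ) be ξ with its token at index 0 replaced by μ₋. Define A₊ = { ξ : ∃ X̃, (∀ m, ‖X̃(m) − X₊(ξ)(m)‖ ≤ τ) ∧ f(X̃) ≤ 0 } and A₋ = { ξ : ∃ X̃, (∀ m, ‖X̃(m) − X₋(ξ)(m)‖ ≤ τ) ∧ f(X̃) ≥ 0 }. If A₊ and A₋ are ν-measurable, then (1/2)·ν(A₊) + (1/2)·ν(A₋) ≥ 1/4. -/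
/-!
Removing the signal token — replacing it by `0` — moves a data point by at most `τ` whatever its
label, since both signals have norm at most `τ`. The classifier's value at this label-free point is
either `≤ 0` or `≥ 0`, so every noise draw lies in `A₊` or in `A₋`; hence `ν(A₊) + ν(A₋) ≥ 1`.
-/

open MeasureTheory Function

section Perturbation

variable {ι E : Type*} [DecidableEq ι] [SeminormedAddCommGroup E]

lemma norm_update_sub_update_le (ξ : ι → E) (i : ι) (a b : E) (m : ι) :
    ‖update ξ i a m - update ξ i b m‖ ≤ ‖a - b‖ := by
  rcases eq_or_ne m i with rfl | hm
  · simp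
  · simp [update_of_ne hm]

lemma exists_perturbation_nonpos_or_nonneg (f : (ι → E) → ℝ) (ξ : ι → E) (i : ι) {τ : ℝ}
    {a b : E} (ha : ‖a‖ ≤ τ) (hb : ‖b‖ ≤ τ) :
    (∃ Xt : ι → E, (∀ m, ‖Xt m - update ξ i a m‖ ≤ τ) ∧ f Xt ≤ 0) ∨
      (∃ Xt : ι → E, (∀ m, ‖Xt m - update ξ i b m‖ ≤ τ) ∧ 0 ≤ f Xt) := by
  have hclose (c : E) (hc : ‖c‖ ≤ τ) (m : ι) : ‖update ξ i 0 m - update ξ i c m‖ ≤ τ :=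
    (norm_update_sub_update_le ξ i 0 c m).trans (by rwa [zero_sub, norm_neg])
  rcases le_total (f (update ξ i 0)) 0 with h | h
  · exact .inl ⟨_, hclose a ha, h⟩
  · exact .inr ⟨_, hclose b hb, h⟩

end Perturbation

lemma one_le_measure_add_measure_of_union_eq_univ {α : Type*} [MeasurableSpace α]
    (μ : Measure α) [IsProbabilityMeasure μ] {s t : Set α} (h : s ∪ t = Set.univ) :
    1 ≤ μ s + μ t :=
  calc 1 = μ (s ∪ t) := by rw [h, measure_univ]
    _ ≤ μ s + μ t := measure_union_le s t

theorem robust_error_lower_bound_general (d M : ℕ) (hM : 1 ≤ M) (τ : ℝ)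
    (μp μm : EuclideanSpace ℝ (Fin d)) (hμp : ‖μp‖ ≤ τ) (hμm : ‖μm‖ ≤ τ)
    (ν : Measure (Fin M → EuclideanSpace ℝ (Fin d))) [IsProbabilityMeasure ν]
    (f : (Fin M → EuclideanSpace ℝ (Fin d)) → ℝ)
    (Ap Am : Set (Fin M → EuclideanSpace ℝ (Fin d)))
    (hAp : Ap = {ξ : Fin M → EuclideanSpace ℝ (Fin d) |
        ∃ Xt : Fin M → EuclideanSpace ℝ (Fin d),
          (∀ m, ‖Xt m - Function.update ξ ⟨0, hM⟩ μp m‖ ≤ τ) ∧ f Xt ≤ 0})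
    (hAm : Am = {ξ : Fin M → EuclideanSpace ℝ (Fin d) |
        ∃ Xt : Fin M → EuclideanSpace ℝ (Fin d),
          (∀ m, ‖Xt m - Function.update ξ ⟨0, hM⟩ μm m‖ ≤ τ) ∧ 0 ≤ f Xt}) :
    (1 : ENNReal) / 4 ≤ (1 : ENNReal) / 2 * ν Ap + (1 : ENNReal) / 2 * ν Am := by
  have hcover : Ap ∪ Am = Set.univ := by
    refine Set.eq_univ_of_forall fun ξ => ?_
    rw [hAp, hAm]
    exact exists_perturbation_nonpos_or_nonneg f ξ _ hμp hμm
  calc (1 : ENNReal) / 4 ≤ 1 / 2 * 1 := by norm_num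
    _ ≤ 1 / 2 * (ν Ap + ν Am) := by
      gcongr
      exact one_le_measure_add_measure_of_union_eq_univ ν hcover
    _ = 1 / 2 * ν Ap + 1 / 2 * ν Am := mul_add _ _ _

/-- Large-perturbation robust-error lower bound (paper's Theorem 2): if both
signal tokens have norm at most `τ`, then for any classifier `f` and any noise
distribution `ν`, the robust test error `(1/2)·ν(A₊) + (1/2)·ν(A₋)` is at
least `1/4`. -/
theorem robust_error_lower_bound (d M : ℕ) (hM : 1 ≤ M) (τ : ℝ) (hτ : 0 ≤ τ)
    (μp μm : EuclideanSpace ℝ (Fin d)) (hμp : ‖μp‖ ≤ τ) (hμm : ‖μm‖ ≤ τ)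
    (ν : Measure (Fin M → EuclideanSpace ℝ (Fin d))) [IsProbabilityMeasure ν]
    (f : (Fin M → EuclideanSpace ℝ (Fin d)) → ℝ)
    (Ap Am : Set (Fin M → EuclideanSpace ℝ (Fin d)))
    (hAp : Ap = {ξ : Fin M → EuclideanSpace ℝ (Fin d) |
        ∃ Xt : Fin M → EuclideanSpace ℝ (Fin d),
          (∀ m, ‖Xt m - Function.update ξ ⟨0, hM⟩ μp m‖ ≤ τ) ∧ f Xt ≤ 0})
    (hAm : Am = {ξ : Fin M → EuclideanSpace ℝ (Fin d) |
        ∃ Xt : Fin M → EuclideanSpace ℝ (Fin d),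
          (∀ m, ‖Xt m - Function.update ξ ⟨0, hM⟩ μm m‖ ≤ τ) ∧ 0 ≤ f Xt})
    (hApm : MeasurableSet Ap) (hAmm : MeasurableSet Am) :
    (1 : ENNReal) / 4 ≤ (1 : ENNReal) / 2 * ν Ap + (1 : ENNReal) / 2 * ν Am :=
  robust_error_lower_bound_general d M hM τ μp μm hμp hμm ν f Ap Am hAp hAm
end
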